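/- arXiv:2511.13810 — 2 statements merged into one kernel-verified Lean document; each statement's English description precedes it below -/
import Mathlib

section
/- For k > 1, in the group G = ℤ[1/k] ⋊ ℤ, the centralizer of the element b = (0,1) is exactly the cyclic subgroup {(0, m) : m ∈ ℤ} generated by b. -/
/-- The carrier `ℤ[1/k] × ℤ` inside `ℚ × ℤ`. -/
def BSset (k : ℤ) : Set (ℚ × ℤ) := {p | ∃ z i : ℤ, p.1 = (z : ℚ) * (k : ℚ) ^ i}

/-- The multiplication `(x₁, m₁) · (x₂, m₂) = (x₁ + x₂·k^{−m₁}, m₁ + m₂)`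
of the group `ℤ[1/k] ⋊ ℤ`. -/
def BSmul (k : ℤ) (p q : ℚ × ℤ) : ℚ × ℤ := (p.1 + q.1 * (k : ℚ) ^ (-p.2), p.2 + q.2)

/-- For `k > 1`, in `G = ℤ[1/k] ⋊ ℤ` the centralizer of `b = (0,1)` is exactly
the cyclic subgroup `{(0, m) : m ∈ ℤ}` generated by `b`. -/
theorem BS_centralizer_of_b (k : ℤ) (hk : 1 < k) :
    ∀ p ∈ BSset k,
      (BSmul k p ((0, 1) : ℚ × ℤ) = BSmul k ((0, 1) : ℚ × ℤ) p ↔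
        ∃ m : ℤ, p = ((0 : ℚ), m)) := by
  intro p _
  have hk1 : ((k : ℚ))⁻¹ ≠ 1 := by
    have : (1 : ℚ) < (k : ℚ) := by exact_mod_cast hk
    intro h
    have : (k : ℚ) = 1 := by field_simp at h; linarith
    linarith
  constructor
  · intro h
    simp only [BSmul, Prod.mk.injEq, Prod.ext_iff] at h
    obtain ⟨h1, _⟩ := h
    simp only [zero_mul, add_zero, zero_add, zpow_neg, zpow_one] at h1
    have h1' : p.1 * 1 = p.1 * (k : ℚ)⁻¹ := by rw [mul_one]; exact h1
    rcases mul_eq_mul_left_iff.mp h1' with h | h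
    · exact absurd h.symm hk1
    · exact ⟨p.2, Prod.ext h rfl⟩
  · rintro ⟨m, rfl⟩
    simp [BSmul, add_comm]
end

section
/- Let R be a commutative unital ring and α₁, β₁, α₂, β₂, ξ₁, τ₁, ξ₂, τ₂ ∈ R satisfy α₁τ₁ = ξ₁β₁, α₂τ₂ = ξ₂β₂, and 1 = α₁τ₂ − ξ₂β₁ = ξ₁β₂ − α₂τ₁. Then (ξ₁τ₂ − ξ₂τ₁)·(α₁β₂ − α₂β₁) = 1; in particular both γ = α₁β₂ − α₂β₁ and δ = ξ₁τ₂ − ξ₂τ₁ are units of R. -/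
/-!
Write `ω(u, v) = u₁v₂ - u₂v₁` for the area form on `R²`, so that in `UT₃(R)` the commutator of
`t₁₂(u₁)t₂₃(u₂)⋯` and `t₁₂(v₁)t₂₃(v₂)⋯` is `t₁₃(ω(u, v))`. With `aᵢ = (αᵢ, βᵢ)` and
`zᵢ = (ξᵢ, τᵢ)` the hypotheses say `ω(a₁, z₁) = 0` and `ω(a₁, z₂) = ω(z₁, a₂) = 1`, and the
Plücker relation `ω(z₁, z₂) ω(a₁, a₂) = ω(z₁, a₁) ω(z₂, a₂) - ω(z₁, a₂) ω(z₂, a₁)` gives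
`0 - 1 · (-1) = 1`.
-/

namespace MalcevUT3

variable {R : Type*} [CommRing R]

def areaForm (u v : R × R) : R := u.1 * v.2 - u.2 * v.1

theorem areaForm_swap (u v : R × R) : areaForm v u = -areaForm u v := by
  unfold areaForm
  ring

theorem areaForm_mul_areaForm (u v x y : R × R) :
    areaForm u v * areaForm x y =
      areaForm u x * areaForm v y - areaForm u y * areaForm v x := by
  unfold areaForm
  ring

theorem areaForm_mul_areaForm_eq_one {a₁ a₂ z₁ z₂ : R × R} (h₁ : areaForm a₁ z₁ = 0)
    (h₃ : areaForm a₁ z₂ = 1) (h₄ : areaForm z₁ a₂ = 1) :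
    areaForm z₁ z₂ * areaForm a₁ a₂ = 1 := by
  rw [areaForm_mul_areaForm, areaForm_swap a₁ z₁, areaForm_swap a₁ z₂, h₁, h₃, h₄]
  ring

end MalcevUT3

open MalcevUT3 in
theorem malcev_unit_computation_general (R : Type*) [CommRing R]
    (α₁ β₁ α₂ β₂ ξ₁ τ₁ ξ₂ τ₂ : R)
    (h₁ : α₁ * τ₁ = ξ₁ * β₁)
    (h₃ : α₁ * τ₂ - ξ₂ * β₁ = 1) (h₄ : ξ₁ * β₂ - α₂ * τ₁ = 1) :
    (ξ₁ * τ₂ - ξ₂ * τ₁) * (α₁ * β₂ - α₂ * β₁) = 1 ∧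
    IsUnit (α₁ * β₂ - α₂ * β₁) ∧ IsUnit (ξ₁ * τ₂ - ξ₂ * τ₁) := by
  have key : areaForm (ξ₁, τ₁) (ξ₂, τ₂) * areaForm (α₁, β₁) (α₂, β₂) = 1 :=
    areaForm_mul_areaForm_eq_one (a₂ := (α₂, β₂))
      (show α₁ * τ₁ - β₁ * ξ₁ = 0 by linear_combination h₁)
      (show α₁ * τ₂ - β₁ * ξ₂ = 1 by linear_combination h₃)
      (show ξ₁ * β₂ - τ₁ * α₂ = 1 by linear_combination h₄)
  have hprod : (ξ₁ * τ₂ - ξ₂ * τ₁) * (α₁ * β₂ - α₂ * β₁) = 1 := by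
    unfold areaForm at key
    linear_combination key
  exact ⟨hprod, IsUnit.of_mul_eq_one_right _ hprod, IsUnit.of_mul_eq_one _ hprod⟩

/-- The key ring computation in the regularization of Mal'cev's interpretation:
if `α₁τ₁ = ξ₁β₁`, `α₂τ₂ = ξ₂β₂` and `1 = α₁τ₂ − ξ₂β₁ = ξ₁β₂ − α₂τ₁`, then
`(ξ₁τ₂ − ξ₂τ₁)(α₁β₂ − α₂β₁) = 1`, so both factors are units. -/
theorem malcev_unit_computation (R : Type*) [CommRing R]
    (α₁ β₁ α₂ β₂ ξ₁ τ₁ ξ₂ τ₂ : R)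
    (h₁ : α₁ * τ₁ = ξ₁ * β₁) (h₂ : α₂ * τ₂ = ξ₂ * β₂)
    (h₃ : α₁ * τ₂ - ξ₂ * β₁ = 1) (h₄ : ξ₁ * β₂ - α₂ * τ₁ = 1) :
    (ξ₁ * τ₂ - ξ₂ * τ₁) * (α₁ * β₂ - α₂ * β₁) = 1 ∧
    IsUnit (α₁ * β₂ - α₂ * β₁) ∧ IsUnit (ξ₁ * τ₂ - ξ₂ * τ₁) :=
  malcev_unit_computation_general R α₁ β₁ α₂ β₂ ξ₁ τ₁ ξ₂ τ₂ h₁ h₃ h₄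
end
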